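/- arXiv:1302.4660 — 6 statements merged into one kernel-verified Lean document; each statement's English description precedes it below -/
import Mathlib

section
/- (Theorem 1, error-floor case.) Assume μ1 = μ2 = 0. If (r1 + r2)/2 = r12, then the Bhattacharyya upper bound P̄_err(σ²) converges, as σ² → 0 from the right, to the finite positive limit sqrt(P1·P2)·( 2^{−M}·v12 / sqrt(v1·v2) )^{−1/2}; in particular P̄_err(σ²) = O(1) and does not tend to 0 as σ² → 0. -/
/-! With zero means, `K(s)` is half the logarithm of
`det (½(C + s)) / √(det (A + s) det (B + s))`, where `A, B, C` are the compressed covariances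
`ΦΣ₁Φᵀ, ΦΣ₂Φᵀ, Φ(Σ₁+Σ₂)Φᵀ`. Diagonalising, each `det (X + s)` is `s ^ (M - rank X)` times the product of `λ + s` over the nonzero eigenvalues `λ`
of `X`. The rank condition makes the powers of `s` cancel exactly, leaving a ratio that is
continuous and positive at `s = 0`, where it equals `2^{-M} v₁₂ / √(v₁ v₂)`. -/

open Matrix MeasureTheory Filter Real Topology

/-- Pseudo-determinant of a real square matrix: the product of the nonzero
eigenvalues when the matrix is Hermitian (symmetric), with the empty product
equal to 1; junk value 0 otherwise. -/
noncomputable def pdet {n : ℕ} (A : Matrix (Fin n) (Fin n) ℝ) : ℝ :=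
  if h : A.IsHermitian then
    ∏ i ∈ Finset.univ.filter (fun i => h.eigenvalues i ≠ 0), h.eigenvalues i
  else 0

/-- Bhattacharyya exponent `K(σ²)` for the two-class compressive
classification problem, as a function of the noise level `s = σ²`. -/
noncomputable def Kb {M N : ℕ} (Φ : Matrix (Fin M) (Fin N) ℝ)
    (S1 S2 : Matrix (Fin N) (Fin N) ℝ) (μ1 μ2 : Fin N → ℝ) (s : ℝ) : ℝ :=
  1/8 * ((Φ *ᵥ (μ1 - μ2)) ⬝ᵥ
      (((1/2 : ℝ) • (Φ * (S1 + S2) * Φᵀ + s • (1 : Matrix (Fin M) (Fin M) ℝ)))⁻¹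
        *ᵥ (Φ *ᵥ (μ1 - μ2))))
  + 1/2 * Real.log
      (((1/2 : ℝ) • (Φ * (S1 + S2) * Φᵀ + s • (1 : Matrix (Fin M) (Fin M) ℝ))).det /
        Real.sqrt ((Φ * S1 * Φᵀ + s • (1 : Matrix (Fin M) (Fin M) ℝ)).det *
          (Φ * S2 * Φᵀ + s • (1 : Matrix (Fin M) (Fin M) ℝ)).det))

/-- Bhattacharyya upper bound `P̄_err(σ²)` to the misclassification probability. -/
noncomputable def Perr {M N : ℕ} (Φ : Matrix (Fin M) (Fin N) ℝ)
    (S1 S2 : Matrix (Fin N) (Fin N) ℝ) (μ1 μ2 : Fin N → ℝ) (P1 P2 : ℝ) (s : ℝ) : ℝ :=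
  Real.sqrt (P1 * P2) * Real.exp (-(Kb Φ S1 S2 μ1 μ2 s))

open Finset

namespace Matrix.IsHermitian

variable {n : Type*} [Fintype n] [DecidableEq n] {A : Matrix n n ℝ}

theorem det_add_smul_one (hA : A.IsHermitian) (s : ℝ) :
    (A + s • (1 : Matrix n n ℝ)).det = ∏ i, (hA.eigenvalues i + s) := by
  have h : A + s • (1 : Matrix n n ℝ) = -(scalar n (-s) - A) := by
    rw [neg_sub, scalar_apply, ← smul_one_eq_diagonal, neg_smul, sub_neg_eq_add]
  rw [h, det_neg, ← eval_charpoly, hA.charpoly_eq, Polynomial.eval_prod]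
  simp only [Polynomial.eval_sub, Polynomial.eval_X, Polynomial.eval_C,
    RCLike.ofReal_real_eq_id, id]
  rw [← card_univ, ← prod_const, ← prod_mul_distrib]
  exact prod_congr rfl fun i _ => by ring

noncomputable def shiftedPdet (hA : A.IsHermitian) (s : ℝ) : ℝ :=
  ∏ i with hA.eigenvalues i ≠ 0, (hA.eigenvalues i + s)

theorem card_eigenvalues_eq_zero (hA : A.IsHermitian) :
    #{i | hA.eigenvalues i = 0} = Fintype.card n - A.rank := by
  have := card_filter_add_card_filter_not (s := univ) (fun i => hA.eigenvalues i ≠ 0)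
  simp only [not_not, card_univ] at this
  rw [hA.rank_eq_card_non_zero_eigs, Fintype.card_subtype]
  omega

theorem det_add_smul_one_eq_pow_mul_shiftedPdet (hA : A.IsHermitian) (s : ℝ) :
    (A + s • (1 : Matrix n n ℝ)).det = s ^ (Fintype.card n - A.rank) * hA.shiftedPdet s := by
  rw [hA.det_add_smul_one, ← prod_filter_not_mul_prod_filter univ (hA.eigenvalues · ≠ 0),
    ← hA.card_eigenvalues_eq_zero, shiftedPdet, ← prod_const]
  congr 1
  refine prod_congr (by simp only [not_not]) fun i hi => ?_
  rw [(mem_filter.1 hi).2, zero_add]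

theorem continuous_shiftedPdet (hA : A.IsHermitian) : Continuous hA.shiftedPdet :=
  continuous_finsetProd _ fun _ _ => continuous_const.add continuous_id

end Matrix.IsHermitian

theorem Matrix.PosSemidef.shiftedPdet_pos {n : Type*} [Fintype n] [DecidableEq n]
    {A : Matrix n n ℝ} (hA : A.PosSemidef) {s : ℝ} (hs : 0 ≤ s) :
    0 < hA.isHermitian.shiftedPdet s :=
  prod_pos fun i hi =>
    add_pos_of_pos_of_nonneg ((hA.eigenvalues_nonneg i).lt_of_ne' (mem_filter.1 hi).2) hs

theorem Matrix.IsHermitian.shiftedPdet_zero {m : ℕ} {A : Matrix (Fin m) (Fin m) ℝ}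
    (hA : A.IsHermitian) : hA.shiftedPdet 0 = pdet A := by
  simp only [shiftedPdet, add_zero, pdet, dif_pos hA]

theorem Matrix.PosSemidef.mul_mul_transpose_same {m n : Type*} [Fintype m] [Fintype n]
    {S : Matrix n n ℝ} (hS : S.PosSemidef) (Φ : Matrix m n ℝ) :
    (Φ * S * Φᵀ).PosSemidef := by
  simpa using hS.mul_mul_conjTranspose_same Φ

section DetRatio

variable {m : ℕ} {A B C : Matrix (Fin m) (Fin m) ℝ}

/-- The argument of the logarithm in `Kb` (for zero means) after cancelling the common power of
`s` from numerator and denominator. -/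
noncomputable def regularizedDetRatio (hA : A.IsHermitian) (hB : B.IsHermitian)
    (hC : C.IsHermitian) (s : ℝ) : ℝ :=
  2 ^ (-(m : ℝ)) * hC.shiftedPdet s / √(hA.shiftedPdet s * hB.shiftedPdet s)

theorem det_half_div_sqrt_det_eq_regularizedDetRatio (hA : A.IsHermitian) (hB : B.IsHermitian)
    (hC : C.IsHermitian) (hrank : A.rank + B.rank = 2 * C.rank) {s : ℝ} (hs : 0 < s) :
    ((1 / 2 : ℝ) • (C + s • (1 : Matrix (Fin m) (Fin m) ℝ))).det /
        √((A + s • (1 : Matrix (Fin m) (Fin m) ℝ)).det *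
          (B + s • (1 : Matrix (Fin m) (Fin m) ℝ)).det) =
      regularizedDetRatio hA hB hC s := by
  have hcorank : (m - A.rank) + (m - B.rank) = 2 * (m - C.rank) := by
    have := A.rank_le_width; have := B.rank_le_width; have := C.rank_le_width
    omega
  have hhalf : (1 / 2 : ℝ) ^ m = 2 ^ (-(m : ℝ)) := by
    rw [rpow_neg zero_le_two, rpow_natCast, one_div, inv_pow]
  rw [det_smul, hA.det_add_smul_one_eq_pow_mul_shiftedPdet,
    hB.det_add_smul_one_eq_pow_mul_shiftedPdet, hC.det_add_smul_one_eq_pow_mul_shiftedPdet,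
    Fintype.card_fin, mul_mul_mul_comm, ← pow_add,
    hcorank, pow_mul', sqrt_mul (by positivity), sqrt_sq (by positivity), mul_left_comm,
    mul_div_mul_left _ _ (by positivity), hhalf, regularizedDetRatio]

theorem regularizedDetRatio_zero (hA : A.IsHermitian) (hB : B.IsHermitian) (hC : C.IsHermitian) :
    regularizedDetRatio hA hB hC 0 = 2 ^ (-(m : ℝ)) * pdet C / √(pdet A * pdet B) := by
  rw [regularizedDetRatio, hA.shiftedPdet_zero, hB.shiftedPdet_zero, hC.shiftedPdet_zero]

theorem regularizedDetRatio_pos (hA : A.PosSemidef) (hB : B.PosSemidef) (hC : C.PosSemidef)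
    {s : ℝ} (hs : 0 ≤ s) :
    0 < regularizedDetRatio hA.isHermitian hB.isHermitian hC.isHermitian s :=
  div_pos (mul_pos (by positivity) (hC.shiftedPdet_pos hs))
    (sqrt_pos.2 (mul_pos (hA.shiftedPdet_pos hs) (hB.shiftedPdet_pos hs)))

theorem continuousAt_regularizedDetRatio (hA : A.PosSemidef) (hB : B.PosSemidef)
    (hC : C.IsHermitian) : ContinuousAt (regularizedDetRatio hA.isHermitian hB.isHermitian hC) 0 :=
  (continuous_const.mul hC.continuous_shiftedPdet).continuousAt.div
    (hA.isHermitian.continuous_shiftedPdet.mul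
      hB.isHermitian.continuous_shiftedPdet).sqrt.continuousAt
    (sqrt_pos.2 (mul_pos (hA.shiftedPdet_pos le_rfl) (hB.shiftedPdet_pos le_rfl))).ne'

end DetRatio

theorem Kb_zero_zero {M N : ℕ} (Φ : Matrix (Fin M) (Fin N) ℝ)
    (S1 S2 : Matrix (Fin N) (Fin N) ℝ) (s : ℝ) :
    Kb Φ S1 S2 0 0 s = 1 / 2 * log
      (((1 / 2 : ℝ) • (Φ * (S1 + S2) * Φᵀ + s • (1 : Matrix (Fin M) (Fin M) ℝ))).det /
        √((Φ * S1 * Φᵀ + s • (1 : Matrix (Fin M) (Fin M) ℝ)).det *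
          (Φ * S2 * Φᵀ + s • (1 : Matrix (Fin M) (Fin M) ℝ)).det)) := by
  simp [Kb]

theorem theorem1_error_floor_general (M N : ℕ)
    (Φ : Matrix (Fin M) (Fin N) ℝ) (S1 S2 : Matrix (Fin N) (Fin N) ℝ)
    (hS1 : S1.PosSemidef) (hS2 : S2.PosSemidef) (μ1 μ2 : Fin N → ℝ)
    (hμ1 : μ1 = 0) (hμ2 : μ2 = 0)
    (P1 P2 : ℝ) (hP1 : 0 < P1) (hP2 : 0 < P2)
    (hrank : (Φ * S1 * Φᵀ).rank + (Φ * S2 * Φᵀ).rank = 2 * (Φ * (S1 + S2) * Φᵀ).rank) :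
    0 < Real.sqrt (P1 * P2) *
        ((2:ℝ) ^ (-(M:ℝ)) * pdet (Φ * (S1 + S2) * Φᵀ) /
          Real.sqrt (pdet (Φ * S1 * Φᵀ) * pdet (Φ * S2 * Φᵀ))) ^ (-(1:ℝ)/2) ∧
    Filter.Tendsto (fun s : ℝ => Perr Φ S1 S2 μ1 μ2 P1 P2 s) (𝓝[>] 0)
      (𝓝 (Real.sqrt (P1 * P2) *
        ((2:ℝ) ^ (-(M:ℝ)) * pdet (Φ * (S1 + S2) * Φᵀ) /
          Real.sqrt (pdet (Φ * S1 * Φᵀ) * pdet (Φ * S2 * Φᵀ))) ^ (-(1:ℝ)/2))) := by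
  subst hμ1 hμ2
  have hA := hS1.mul_mul_transpose_same Φ
  have hB := hS2.mul_mul_transpose_same Φ
  have hC := (hS1.add hS2).mul_mul_transpose_same Φ
  rw [← regularizedDetRatio_zero hA.isHermitian hB.isHermitian hC.isHermitian]
  have hρ0 := regularizedDetRatio_pos hA hB hC le_rfl
  have hlim := (continuousAt_regularizedDetRatio hA hB hC.isHermitian).continuousWithinAt
    (s := Set.Ioi 0)
  refine ⟨mul_pos (sqrt_pos.2 (mul_pos hP1 hP2)) (rpow_pos_of_pos hρ0 _),
    ((hlim.tendsto.rpow_const (Or.inl hρ0.ne')).const_mul _).congr' ?_⟩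
  filter_upwards [self_mem_nhdsWithin] with s (hs : 0 < s)
  rw [Perr, Kb_zero_zero, det_half_div_sqrt_det_eq_regularizedDetRatio hA.isHermitian
    hB.isHermitian hC.isHermitian hrank hs,
    rpow_def_of_pos (regularizedDetRatio_pos hA hB hC hs.le)]
  ring_nf

/-- Theorem 1, error-floor case: with zero-mean classes, if
`(r1 + r2)/2 = r12`, the Bhattacharyya upper bound converges as `σ² → 0⁺` to
the finite positive limit `sqrt(P1 P2) (2^{-M} v12 / sqrt(v1 v2))^{-1/2}`;
in particular it is `O(1)` and does not tend to `0`. -/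
theorem theorem1_error_floor (M N : ℕ) (hM : 0 < M) (hN : 0 < N)
    (Φ : Matrix (Fin M) (Fin N) ℝ) (S1 S2 : Matrix (Fin N) (Fin N) ℝ)
    (hS1 : S1.PosSemidef) (hS2 : S2.PosSemidef) (μ1 μ2 : Fin N → ℝ)
    (hμ1 : μ1 = 0) (hμ2 : μ2 = 0)
    (P1 P2 : ℝ) (hP1 : 0 < P1) (hP2 : 0 < P2) (hP : P1 + P2 = 1)
    (hrank : (Φ * S1 * Φᵀ).rank + (Φ * S2 * Φᵀ).rank = 2 * (Φ * (S1 + S2) * Φᵀ).rank) :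
    0 < Real.sqrt (P1 * P2) *
        ((2:ℝ) ^ (-(M:ℝ)) * pdet (Φ * (S1 + S2) * Φᵀ) /
          Real.sqrt (pdet (Φ * S1 * Φᵀ) * pdet (Φ * S2 * Φᵀ))) ^ (-(1:ℝ)/2) ∧
    Filter.Tendsto (fun s : ℝ => Perr Φ S1 S2 μ1 μ2 P1 P2 s) (𝓝[>] 0)
      (𝓝 (Real.sqrt (P1 * P2) *
        ((2:ℝ) ^ (-(M:ℝ)) * pdet (Φ * (S1 + S2) * Φᵀ) /
          Real.sqrt (pdet (Φ * S1 * Φᵀ) * pdet (Φ * S2 * Φᵀ))) ^ (-(1:ℝ)/2))) :=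
  theorem1_error_floor_general M N Φ S1 S2 hS1 hS2 μ1 μ2 hμ1 hμ2 P1 P2 hP1 hP2 hrank
end

section
/- (Almost-sure rank of the projected covariance.) Let Σ be a real symmetric positive semidefinite N×N matrix with rank(Σ) = ρ, and let the entries of the random M×N matrix Φ be i.i.d. standard Gaussian random variables (i.e., Φ is distributed according to the product over the M·N entries of the standard Gaussian measure on ℝ). Then, almost surely, rank(ΦΣΦᵀ) = min(M, ρ). -/
/-!
With `r = min M ρ`, the leading `r × r` minor of `Φ Σ Φᵀ` is a polynomial in the entries
of `Φ`. It is not the zero polynomial: writing `Σ = Bᵀ B`, pick `r` vectors whose images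
under `B` are linearly independent; for the matrix `E` with these rows, `E Σ Eᵀ` is the Gram
matrix of those images, hence nonsingular. The zero set of a nonzero polynomial is null for
a product of atomless measures (Fubini in one variable at a time: off a null set of the
other variables the polynomial has a nonvanishing leading coefficient, hence finitely many
roots). So almost surely the minor is nonzero and `rank (Φ Σ Φᵀ) ≥ r`, while
`rank (Φ Σ Φᵀ) ≤ min M (rank Σ)` holds for every `Φ`.
-/

open Matrix MeasureTheory ProbabilityTheory

namespace MvPolynomial

variable {μ : Measure ℝ} [SigmaFinite μ] [NullSingletonClass μ]

theorem ae_eval_ne_zero_fin : ∀ {n : ℕ} {p : MvPolynomial (Fin n) ℝ}, p ≠ 0 →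
    ∀ᵐ x ∂Measure.pi (fun _ : Fin n => μ), eval x p ≠ 0
  | 0, p, hp => by
    obtain ⟨c, rfl⟩ := C_surjective (Fin 0) p
    exact ae_of_all _ fun x => by simpa using hp
  | n + 1, p, hp => by
    set q := finSuccEquiv ℝ n p
    have hq : q ≠ 0 := by simpa [q] using hp
    have hslices : ∀ᵐ y ∂Measure.pi (fun _ : Fin n => μ), ∀ᵐ a ∂μ,
        eval (Fin.cons a y : Fin (n + 1) → ℝ) p ≠ 0 := by
      filter_upwards [ae_eval_ne_zero_fin (Polynomial.leadingCoeff_ne_zero.mpr hq)] with y hy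
      have hqy : q.map (eval y) ≠ 0 := fun h => hy <| by
        rw [Polynomial.leadingCoeff, ← Polynomial.coeff_map, h, Polynomial.coeff_zero]
      refine measure_mono_null (fun a ha => ?_)
        ((Polynomial.finite_setOfPred_isRoot hqy).measure_zero μ)
      simpa [eval_eq_eval_mv_eval'] using ha
    have hmeas : MeasurableSet
        {z : ℝ × (Fin n → ℝ) | eval (Fin.cons z.1 z.2 : Fin (n + 1) → ℝ) p ≠ 0} :=
      (isOpen_ne_fun ((continuous_eval p).comp (by fun_prop)) continuous_const).measurableSet
    rw [← (measurePreserving_piFinSuccAbove (fun _ => μ) 0).symm.map_eq,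
      MeasurableEmbedding.ae_map_iff (MeasurableEquiv.measurableEmbedding _)]
    have hcons : ∀ z : ℝ × (Fin n → ℝ),
        (MeasurableEquiv.piFinSuccAbove (fun _ => ℝ) 0).symm z = Fin.cons z.1 z.2 := fun z => by
      simp [Fin.insertNthEquiv, Fin.insertNth_zero']
    simp only [hcons]
    rw [Measure.ae_prod_iff_ae_ae hmeas,
      Measure.ae_ae_comm (p := fun a y => eval (Fin.cons a y : Fin (n + 1) → ℝ) p ≠ 0) hmeas]
    exact hslices

theorem ae_eval_ne_zero {ι : Type*} [Fintype ι] {p : MvPolynomial ι ℝ} (hp : p ≠ 0) :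
    ∀ᵐ x ∂Measure.pi (fun _ : ι => μ), eval x p ≠ 0 := by
  let e := Fintype.equivFin ι
  have hp' : rename e p ≠ 0 := (map_ne_zero_iff _ (rename_injective e e.injective)).mpr hp
  rw [← (measurePreserving_piCongrLeft (fun _ => μ) e.symm).map_eq,
    MeasurableEmbedding.ae_map_iff (MeasurableEquiv.measurableEmbedding _)]
  filter_upwards [ae_eval_ne_zero_fin hp'] with y hy
  have hy' : (MeasurableEquiv.piCongrLeft (fun _ => ℝ) e.symm) y = y ∘ e := by
    funext i
    simp [MeasurableEquiv.piCongrLeft, Equiv.piCongrLeft]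
  rwa [hy', ← eval_rename]

end MvPolynomial

theorem MeasureTheory.measurePreserving_uncurry_pi_pi {ι κ α : Type*} [Fintype ι] [Fintype κ]
    [MeasurableSpace α] (μ : ι → κ → Measure α) [∀ i j, IsProbabilityMeasure (μ i j)] :
    MeasurePreserving Function.uncurry (Measure.pi fun i => Measure.pi fun j => μ i j)
      (Measure.pi fun p : ι × κ => μ p.1 p.2) where
  measurable := (MeasurableEquiv.curry ι κ α).symm.measurable
  map_eq := by
    simpa only [Measure.infinitePi_eq_pi, MeasurableEquiv.coe_curry_symm] using
      Measure.infinitePi_map_curry_symm μ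

theorem LinearMap.exists_linearIndependent_comp_of_le_finrank_range {K V W : Type*}
    [DivisionRing K] [AddCommGroup V] [Module K V] [AddCommGroup W] [Module K W]
    (f : V →ₗ[K] W) {r : ℕ} (hr : r ≤ Module.finrank K (LinearMap.range f)) :
    ∃ u : Fin r → V, LinearIndependent K (f ∘ u) := by
  obtain ⟨v, hv⟩ := exists_linearIndependent_of_le_finrank hr
  choose u hu using fun i => LinearMap.mem_range.mp (v i).2
  refine ⟨u, ?_⟩
  have : f ∘ u = (LinearMap.range f).subtype ∘ v := funext hu
  rw [this]
  exact hv.map' _ (Submodule.ker_subtype _)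

namespace Matrix

variable {m n l K R : Type*}

theorem card_le_rank_of_det_submatrix_ne_zero [Fintype n] [Fintype l] [Field K] [DecidableEq l]
    (A : Matrix m n K) (r : l → m) (c : l → n) (h : (A.submatrix r c).det ≠ 0) :
    Fintype.card l ≤ A.rank :=
  rank_of_det_ne_zero h ▸ rank_submatrix_le A r c

theorem rank_mul_mul_transpose_le [Fintype m] [Fintype n] [CommRing K] [StrongRankCondition K]
    (F : Matrix m n K) (S : Matrix n n K) : (F * S * Fᵀ).rank ≤ min (Fintype.card m) S.rank :=
  le_min (rank_le_card_height _) ((rank_mul_le_left _ _).trans (rank_mul_le_right _ _))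

theorem det_ne_zero_of_rank_eq_card [Fintype n] [Field K] [DecidableEq n] {A : Matrix n n K}
    (h : A.rank = Fintype.card n) : A.det ≠ 0 := by
  have hrows : LinearIndependent K A.row := by
    rw [linearIndependent_iff_card_eq_finrank_span, Set.finrank, ← rank_eq_finrank_span_row, h]
  exact ((isUnit_iff_isUnit_det A).mp (linearIndependent_rows_iff_isUnit.mp hrows)).ne_zero

theorem submatrix_mul_mul_transpose [Fintype n] [CommSemiring K] (F : Matrix m n K)
    (S : Matrix n n K) (e : l → m) :
    (F * S * Fᵀ).submatrix e e = F.submatrix e id * S * (F.submatrix e id)ᵀ := by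
  ext i j
  simp [mul_apply]

open scoped MatrixOrder in
theorem PosSemidef.exists_det_mul_mul_transpose_ne_zero [Fintype n] {S : Matrix n n ℝ}
    (hS : S.PosSemidef) {r : ℕ} (hr : r ≤ S.rank) :
    ∃ E : Matrix (Fin r) n ℝ, (E * S * Eᵀ).det ≠ 0 := by
  classical
  obtain ⟨B, rfl⟩ := CStarAlgebra.nonneg_iff_eq_star_mul_self.mp hS.nonneg
  rw [star_eq_conjTranspose, conjTranspose_eq_transpose_of_trivial] at hr ⊢
  rw [rank_transpose_mul_self] at hr
  obtain ⟨u, hu⟩ := B.mulVecLin.exists_linearIndependent_comp_of_le_finrank_range hr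
  refine ⟨of u, det_ne_zero_of_rank_eq_card ?_⟩
  have hrows : of u * Bᵀ = of fun i => B *ᵥ u i := by
    ext i j
    simp [mul_apply, mulVec, dotProduct, mul_comm]
  calc (of u * (Bᵀ * B) * (of u)ᵀ).rank = (of u * Bᵀ * (of u * Bᵀ)ᵀ).rank := by
        simp only [transpose_mul, transpose_transpose, Matrix.mul_assoc]
    _ = Fintype.card (Fin r) := by
        rw [rank_self_mul_transpose, hrows]
        exact LinearIndependent.rank_matrix hu

section DetConjPoly

variable [Fintype l] [DecidableEq l] [Fintype n] [CommRing R]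

noncomputable def detConjPoly (S : Matrix n n R) : MvPolynomial (l × n) R :=
  (mvPolynomialX l n R * S.map (MvPolynomial.C (σ := l × n)) * (mvPolynomialX l n R)ᵀ).det

theorem eval_detConjPoly (S : Matrix n n R) (G : Matrix l n R) :
    MvPolynomial.eval (fun p => G p.1 p.2) (detConjPoly S) = (G * S * Gᵀ).det := by
  have hG : (mvPolynomialX l n R).map (MvPolynomial.eval fun p => G p.1 p.2) = G :=
    mvPolynomialX_map_eval₂ (RingHom.id R) G
  rw [detConjPoly, RingHom.map_det, RingHom.mapMatrix_apply, Matrix.map_mul, Matrix.map_mul,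
    transpose_map, Matrix.map_map, hG]
  simp [Function.comp_def]

end DetConjPoly

end Matrix

theorem rank_proj_covariance_ae_general (M N : ℕ)
    (S : Matrix (Fin N) (Fin N) ℝ) (hS : S.PosSemidef) (ρ : ℕ) (hρ : S.rank = ρ) :
    ∀ᵐ f ∂(Measure.pi fun _ : Fin M => Measure.pi fun _ : Fin N => gaussianReal 0 1),
      ((Matrix.of f) * S * (Matrix.of f)ᵀ).rank = min M ρ := by
  set r := min M ρ
  let e : Fin r → Fin M := Fin.castLE (min_le_left M ρ)
  obtain ⟨E, hE⟩ :=
    hS.exists_det_mul_mul_transpose_ne_zero (hρ ▸ min_le_right M ρ : r ≤ S.rank)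
  have hq : MvPolynomial.rename (Prod.map e id) (detConjPoly (l := Fin r) S) ≠ 0 :=
    (map_ne_zero_iff _ (MvPolynomial.rename_injective _
      ((Fin.castLE_injective _).prodMap Function.injective_id))).mpr
      fun h => hE (by rw [← eval_detConjPoly, h, map_zero])
  have := nullSingletonClass_gaussianReal (μ := 0) one_ne_zero
  have hae := MvPolynomial.ae_eval_ne_zero (μ := gaussianReal 0 1) hq
  have hmp := measurePreserving_uncurry_pi_pi fun (_ : Fin M) (_ : Fin N) => gaussianReal 0 1
  filter_upwards [hmp.quasiMeasurePreserving.ae hae] with f hf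
  rw [MvPolynomial.eval_rename] at hf
  have hdet : ((of f * S * (of f)ᵀ).submatrix e e).det ≠ 0 := by
    rwa [submatrix_mul_mul_transpose, ← eval_detConjPoly]
  exact le_antisymm (by simpa [r, hρ] using rank_mul_mul_transpose_le (of f) S)
    (by simpa using card_le_rank_of_det_submatrix_ne_zero _ e e hdet)

/-- Almost-sure rank of the projected covariance: if `Σ` is a real symmetric
positive semidefinite `N × N` matrix of rank `ρ` and the entries of the random
`M × N` matrix `Φ` are i.i.d. standard Gaussians (product measure of standard
Gaussian measures over the `M·N` entries), then almost surely
`rank (Φ Σ Φᵀ) = min M ρ`. -/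
theorem rank_proj_covariance_ae (M N : ℕ) (hM : 0 < M) (hN : 0 < N)
    (S : Matrix (Fin N) (Fin N) ℝ) (hS : S.PosSemidef) (ρ : ℕ) (hρ : S.rank = ρ) :
    ∀ᵐ f ∂(Measure.pi fun _ : Fin M => Measure.pi fun _ : Fin N => gaussianReal 0 1),
      ((Matrix.of f) * S * (Matrix.of f)ᵀ).rank = min M ρ :=
  rank_proj_covariance_ae_general M N S hS ρ hρ
end

section
/- (Theorem 2, error-floor cases.) Assume μ1 = μ2 = 0, let ρ1 = rank(Σ1), ρ2 = rank(Σ2), ρ12 = rank(Σ1 + Σ2), assume ρ1 ≤ ρ2, and assume the rank relations r1 = min(M, ρ1), r2 = min(M, ρ2), r12 = min(M, ρ12) (which hold with probability 1 for a Gaussian measurement matrix Φ). If either (a) M ≤ ρ1, or (b) ρ12 ≤ M and ρ1 + ρ2 = 2·ρ12, then the Bhattacharyya upper bound P̄_err(σ²) converges, as σ² → 0 from the right, to a finite strictly positive limit; in particular it does not tend to 0. -/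
open Matrix MeasureTheory Filter Real Topology

/-! With equal means only the log-determinant part of `K` survives. Diagonalising a symmetric
matrix `A` gives `det (A + s • 1) = s ^ (M - rank A) * ∏_{λ ≠ 0} (λ + s)`, so in
`det ((A₁₂ + s • 1) / 2) / √(det (A₁ + s • 1) * det (A₂ + s • 1))` the powers of `s` cancel exactly
when `r₁ + r₂ = 2 r₁₂`, and the ratio then tends to `2⁻ᴹ pdet A₁₂ / √(pdet A₁ * pdet A₂) > 0`.
Since `ρ₁, ρ₂ ≤ ρ₁₂` (the kernel of a sum of positive semidefinite matrices is the intersection of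
their kernels), the rank relations give `r₁ + r₂ = 2 r₁₂` in both cases (a) and (b). -/

open Finset
open scoped ComplexOrder

namespace Matrix

section Hermitian

variable {n : Type*} [Fintype n] [DecidableEq n] {A : Matrix n n ℝ}

theorem IsHermitian.det_add_smul_one_s7 (hA : A.IsHermitian) (s : ℝ) :
    (A + s • 1).det = ∏ i, (hA.eigenvalues i + s) := by
  have h := congrArg (Polynomial.eval (-s)) hA.charpoly_eq
  simp only [eval_charpoly, Polynomial.eval_prod, Polynomial.eval_sub, Polynomial.eval_X,
    Polynomial.eval_C, RCLike.ofReal_real_eq_id, id] at h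
  have hneg : scalar n (-s) - A = -(A + s • 1) := by
    rw [scalar_apply, ← smul_one_eq_diagonal, neg_smul]; abel
  have hprod : ∏ i, (-s - hA.eigenvalues i) =
      (-1) ^ Fintype.card n * ∏ i, (hA.eigenvalues i + s) := by
    rw [← card_univ, pow_card_mul_prod]; congr 1; ext; ring
  rw [hneg, det_neg, hprod] at h
  exact mul_left_cancel₀ (pow_ne_zero _ (by norm_num)) h

theorem IsHermitian.det_add_smul_one_eq_pow_mul (hA : A.IsHermitian) (s : ℝ) :
    (A + s • 1).det =
      s ^ (Fintype.card n - A.rank) *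
        ∏ i with hA.eigenvalues i ≠ 0, (hA.eigenvalues i + s) := by
  have hrank : A.rank = #{i | hA.eigenvalues i ≠ 0} := by
    rw [hA.rank_eq_card_non_zero_eigs, Fintype.card_subtype]
  have hker : #{i | ¬hA.eigenvalues i ≠ 0} = Fintype.card n - A.rank := by
    have := card_filter_add_card_filter_not (s := univ) (fun i => hA.eigenvalues i ≠ 0)
    rw [hrank, ← card_univ]
    omega
  rw [hA.det_add_smul_one_s7, ← prod_filter_mul_prod_filter_not univ
    (fun i => hA.eigenvalues i ≠ 0), mul_comm, ← hker, ← prod_const]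
  congr 1
  refine prod_congr rfl fun i hi => ?_
  rw [not_not.mp (mem_filter.mp hi).2, zero_add]

end Hermitian

theorem PosSemidef.rank_le_rank_add {𝕜 n : Type*} [RCLike 𝕜] [Fintype n] [DecidableEq n]
    {A B : Matrix n n 𝕜} (hA : A.PosSemidef) (hB : B.PosSemidef) : A.rank ≤ (A + B).rank := by
  have hker : LinearMap.ker (A + B).mulVecLin ≤ LinearMap.ker A.mulVecLin := by
    intro x hx
    simp only [LinearMap.mem_ker, mulVecLin_apply] at hx ⊢
    have hsum : star x ⬝ᵥ A *ᵥ x + star x ⬝ᵥ B *ᵥ x = 0 := by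
      rw [← dotProduct_add, ← add_mulVec, hx, dotProduct_zero]
    refine (hA.dotProduct_mulVec_zero_iff x).mp (le_antisymm ?_ (hA.dotProduct_mulVec_nonneg x))
    exact le_of_add_le_of_nonneg_left hsum.le (hB.dotProduct_mulVec_nonneg x)
  have := Submodule.finrank_mono hker
  have := A.mulVecLin.finrank_range_add_finrank_ker
  have := (A + B).mulVecLin.finrank_range_add_finrank_ker
  unfold Matrix.rank
  omega

section PseudoDeterminant

variable {n : ℕ} {A : Matrix (Fin n) (Fin n) ℝ}

theorem IsHermitian.pdet_eq (hA : A.IsHermitian) :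
    pdet A = ∏ i with hA.eigenvalues i ≠ 0, hA.eigenvalues i :=
  dif_pos hA

theorem PosSemidef.pdet_pos (hA : A.PosSemidef) : 0 < pdet A := by
  rw [hA.isHermitian.pdet_eq]
  refine prod_pos fun i hi => ?_
  exact (hA.eigenvalues_nonneg i).lt_of_ne' (mem_filter.mp hi).2

theorem IsHermitian.tendsto_det_add_smul_one_div_pow (hA : A.IsHermitian) :
    Tendsto (fun s : ℝ => (A + s • 1).det / s ^ (n - A.rank)) (𝓝[>] 0) (𝓝 (pdet A)) := by
  have hcont :
      Continuous fun s : ℝ => ∏ i with hA.eigenvalues i ≠ 0, (hA.eigenvalues i + s) :=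
    continuous_finsetProd _ fun i _ => continuous_const.add continuous_id
  have hlim := hcont.continuousWithinAt (s := Set.Ioi 0) (x := 0) |>.tendsto
  simp only [add_zero, ← hA.pdet_eq] at hlim
  refine hlim.congr' ?_
  filter_upwards [self_mem_nhdsWithin] with s (hs : 0 < s)
  rw [hA.det_add_smul_one_eq_pow_mul, Fintype.card_fin,
    mul_div_cancel_left₀ _ (pow_ne_zero _ hs.ne')]

end PseudoDeterminant

end Matrix

section Bhattacharyya

variable {M : ℕ}

noncomputable def detRatio (A1 A2 A12 : Matrix (Fin M) (Fin M) ℝ) (s : ℝ) : ℝ :=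
  ((1/2 : ℝ) • (A12 + s • 1)).det / √((A1 + s • 1).det * (A2 + s • 1).det)

theorem Kb_of_eq_means {N : ℕ} (Φ : Matrix (Fin M) (Fin N) ℝ)
    (S1 S2 : Matrix (Fin N) (Fin N) ℝ) (μ : Fin N → ℝ) (s : ℝ) :
    Kb Φ S1 S2 μ μ s =
      1/2 * log (detRatio (Φ * S1 * Φᵀ) (Φ * S2 * Φᵀ) (Φ * (S1 + S2) * Φᵀ) s) := by
  unfold Kb detRatio
  simp

theorem tendsto_detRatio {A1 A2 A12 : Matrix (Fin M) (Fin M) ℝ}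
    (h1 : A1.PosSemidef) (h2 : A2.PosSemidef) (h12 : A12.PosSemidef)
    (hrank : A1.rank + A2.rank = 2 * A12.rank) :
    Tendsto (detRatio A1 A2 A12) (𝓝[>] 0)
      (𝓝 ((1/2) ^ M * pdet A12 / √(pdet A1 * pdet A2))) := by
  set D : Matrix (Fin M) (Fin M) ℝ → ℝ → ℝ :=
    fun A s => (A + s • 1).det / s ^ (M - A.rank)
  have hlim : Tendsto (fun s => (1/2 : ℝ) ^ M * D A12 s / √(D A1 s * D A2 s)) (𝓝[>] 0)
      (𝓝 ((1/2) ^ M * pdet A12 / √(pdet A1 * pdet A2))) :=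
    (h12.isHermitian.tendsto_det_add_smul_one_div_pow.const_mul _).div
      (h1.isHermitian.tendsto_det_add_smul_one_div_pow.mul
        h2.isHermitian.tendsto_det_add_smul_one_div_pow).sqrt
      (Real.sqrt_pos.mpr (mul_pos h1.pdet_pos h2.pdet_pos)).ne'
  refine hlim.congr' ?_
  filter_upwards [self_mem_nhdsWithin] with s (hs : 0 < s)
  have hdet : ∀ A : Matrix (Fin M) (Fin M) ℝ, (A + s • 1).det = s ^ (M - A.rank) * D A s :=
    fun A => (mul_div_cancel₀ _ (pow_ne_zero _ hs.ne')).symm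
  have hpow : s ^ (M - A1.rank) * s ^ (M - A2.rank) = (s ^ (M - A12.rank)) ^ 2 := by
    have := A1.rank_le_width; have := A2.rank_le_width; have := A12.rank_le_width
    rw [← pow_add, ← pow_mul]; congr 1; omega
  rw [detRatio, det_smul, Fintype.card_fin, hdet A12, hdet A1, hdet A2, mul_mul_mul_comm, hpow,
    Real.sqrt_mul (sq_nonneg _), Real.sqrt_sq (pow_nonneg hs.le _), mul_left_comm,
    mul_div_mul_left _ _ (pow_ne_zero _ hs.ne')]

end Bhattacharyya

theorem theorem2_error_floor_general (M N : ℕ)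
    (Φ : Matrix (Fin M) (Fin N) ℝ) (S1 S2 : Matrix (Fin N) (Fin N) ℝ)
    (hS1 : S1.PosSemidef) (hS2 : S2.PosSemidef) (μ1 μ2 : Fin N → ℝ)
    (hμ1 : μ1 = 0) (hμ2 : μ2 = 0)
    (P1 P2 : ℝ) (hP1 : 0 < P1) (hP2 : 0 < P2)
    (hρ : S1.rank ≤ S2.rank)
    (hr1 : (Φ * S1 * Φᵀ).rank = min M S1.rank)
    (hr2 : (Φ * S2 * Φᵀ).rank = min M S2.rank)
    (hr12 : (Φ * (S1 + S2) * Φᵀ).rank = min M (S1 + S2).rank)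
    (hcase : M ≤ S1.rank ∨ ((S1 + S2).rank ≤ M ∧ S1.rank + S2.rank = 2 * (S1 + S2).rank)) :
    ∃ c : ℝ, 0 < c ∧
      Filter.Tendsto (fun s : ℝ => Perr Φ S1 S2 μ1 μ2 P1 P2 s) (𝓝[>] 0) (𝓝 c) := by
  subst hμ1 hμ2
  have hΦ : ∀ S : Matrix (Fin N) (Fin N) ℝ, S.PosSemidef → (Φ * S * Φᵀ).PosSemidef :=
    fun S hS => by simpa using hS.mul_mul_conjTranspose_same Φ
  have hρ1 : S1.rank ≤ (S1 + S2).rank := hS1.rank_le_rank_add hS2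
  have hρ2 : S2.rank ≤ (S1 + S2).rank := add_comm S1 S2 ▸ hS2.rank_le_rank_add hS1
  have hrank :
      (Φ * S1 * Φᵀ).rank + (Φ * S2 * Φᵀ).rank = 2 * (Φ * (S1 + S2) * Φᵀ).rank := by
    omega
  obtain ⟨L, hL, hLpos⟩ : ∃ L, Tendsto (detRatio (Φ * S1 * Φᵀ) (Φ * S2 * Φᵀ)
      (Φ * (S1 + S2) * Φᵀ)) (𝓝[>] 0) (𝓝 L) ∧ 0 < L :=
    ⟨_, tendsto_detRatio (hΦ S1 hS1) (hΦ S2 hS2) (hΦ _ (hS1.add hS2)) hrank,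
      div_pos (mul_pos (by positivity) (hΦ _ (hS1.add hS2)).pdet_pos)
        (Real.sqrt_pos.mpr (mul_pos (hΦ S1 hS1).pdet_pos (hΦ S2 hS2).pdet_pos))⟩
  refine ⟨√(P1 * P2) * exp (-(1/2 * log L)),
    mul_pos (Real.sqrt_pos.mpr (mul_pos hP1 hP2)) (exp_pos _), ?_⟩
  simp only [Perr, Kb_of_eq_means]
  exact (((hL.log hLpos.ne').const_mul _).neg.rexp).const_mul _

/-- Theorem 2, error-floor cases: with zero-mean classes, `ρ1 ≤ ρ2`, and the
(almost surely valid) rank relations `r1 = min M ρ1`, `r2 = min M ρ2`,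
`r12 = min M ρ12`, if either `M ≤ ρ1`, or `ρ12 ≤ M` and `ρ1 + ρ2 = 2 ρ12`,
then the Bhattacharyya upper bound converges as `σ² → 0⁺` to a finite strictly
positive limit; in particular it does not tend to `0`. -/
theorem theorem2_error_floor (M N : ℕ) (hM : 0 < M) (hN : 0 < N)
    (Φ : Matrix (Fin M) (Fin N) ℝ) (S1 S2 : Matrix (Fin N) (Fin N) ℝ)
    (hS1 : S1.PosSemidef) (hS2 : S2.PosSemidef) (μ1 μ2 : Fin N → ℝ)
    (hμ1 : μ1 = 0) (hμ2 : μ2 = 0)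
    (P1 P2 : ℝ) (hP1 : 0 < P1) (hP2 : 0 < P2) (hP : P1 + P2 = 1)
    (hρ : S1.rank ≤ S2.rank)
    (hr1 : (Φ * S1 * Φᵀ).rank = min M S1.rank)
    (hr2 : (Φ * S2 * Φᵀ).rank = min M S2.rank)
    (hr12 : (Φ * (S1 + S2) * Φᵀ).rank = min M (S1 + S2).rank)
    (hcase : M ≤ S1.rank ∨ ((S1 + S2).rank ≤ M ∧ S1.rank + S2.rank = 2 * (S1 + S2).rank)) :
    ∃ c : ℝ, 0 < c ∧
      Filter.Tendsto (fun s : ℝ => Perr Φ S1 S2 μ1 μ2 P1 P2 s) (𝓝[>] 0) (𝓝 c) :=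
  theorem2_error_floor_general M N Φ S1 S2 hS1 hS2 μ1 μ2 hμ1 hμ2 P1 P2 hP1 hP2 hρ hr1 hr2 hr12 hcase
end

section
/- (Theorem 2, case ρ1 < M ≤ ρ2.) Assume μ1 = μ2 = 0, let ρ1 = rank(Σ1), ρ2 = rank(Σ2), ρ12 = rank(Σ1 + Σ2), assume ρ1 ≤ ρ2 ≤ ρ12, and assume the rank relations r1 = min(M, ρ1), r2 = min(M, ρ2), r12 = min(M, ρ12). If ρ1 < M ≤ ρ2, then lim_{σ² → 0+} log P̄_err(σ²) / log σ² = (M − ρ1)/4; i.e., the diversity order is d = −(1/2)·((ρ1 − M)/2) = (M − ρ1)/4. -/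
/-! For a positive semidefinite `A` of rank `r` on `ℝ^M`, diagonalising gives
`det (A + s I) = s ^ (M - r) * ∏_{λ ≠ 0} (λ + s)`, so `log det (A + s I) = (M - r) log s + O(1)`
as `s → 0⁺`, the bounded part tending to `log (pdet A)`. With equal means the Bhattacharyya
exponent is `½ (M log ½ + log det(A₁₂ + s I) - ½ (log det(A₁ + s I) + log det(A₂ + s I)))`, hence
`log P̄_err(s) = ((2 r₁₂ - r₁ - r₂) / 4) log s + O(1)`. In the case `ρ₁ < M ≤ ρ₂` the rank
relations give `r₁ = ρ₁` and `r₂ = r₁₂ = M`. -/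

open Matrix MeasureTheory Filter Real Topology

theorem Matrix.IsHermitian.det_add_smul_one_s8 {n : Type*} [Fintype n] [DecidableEq n]
    {A : Matrix n n ℝ} (hA : A.IsHermitian) (s : ℝ) :
    (A + s • (1 : Matrix n n ℝ)).det = ∏ i, (hA.eigenvalues i + s) := by
  have h : A + s • (1 : Matrix n n ℝ) = -(scalar n (-s) - A) := by
    rw [scalar_apply, ← smul_one_eq_diagonal]
    simp
  have hneg : ∀ i, -s - hA.eigenvalues i = -1 * (hA.eigenvalues i + s) := fun i => by ring
  rw [h, det_neg, ← eval_charpoly, hA.charpoly_eq, Polynomial.eval_prod]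
  simp only [Polynomial.eval_sub, Polynomial.eval_X, Polynomial.eval_C, RCLike.ofReal_real_eq_id,
    id, hneg, Finset.prod_mul_distrib, Finset.prod_const, Finset.card_univ, ← mul_assoc, ← mul_pow]
  norm_num

namespace Matrix.PosSemidef

variable {n : Type*} [Fintype n] {A : Matrix n n ℝ}

theorem det_add_smul_one_eq_pow_mul_prod [DecidableEq n] (hA : A.PosSemidef) (s : ℝ) :
    (A + s • (1 : Matrix n n ℝ)).det = s ^ (Fintype.card n - A.rank) *
      ∏ i ∈ Finset.univ.filter (fun i => hA.1.eigenvalues i ≠ 0), (hA.1.eigenvalues i + s) := by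
  have hcard : (Finset.univ.filter (fun i => ¬hA.1.eigenvalues i ≠ 0)).card =
      Fintype.card n - A.rank := by
    rw [hA.1.rank_eq_card_non_zero_eigs, Fintype.card_subtype, Finset.filter_not,
      Finset.card_sdiff_of_subset (Finset.filter_subset _ _), Finset.card_univ]
  rw [hA.1.det_add_smul_one_s8, ← Finset.prod_filter_mul_prod_filter_not Finset.univ
    (fun i => hA.1.eigenvalues i ≠ 0), mul_comm, ← hcard, ← Finset.prod_const]
  congr 1
  refine Finset.prod_congr rfl fun i hi => ?_
  rw [not_not.mp (Finset.mem_filter.mp hi).2, zero_add]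

theorem det_add_smul_one_pos [DecidableEq n] (hA : A.PosSemidef) {s : ℝ} (hs : 0 < s) :
    0 < (A + s • (1 : Matrix n n ℝ)).det :=
  (PosDef.posSemidef_add hA (PosDef.one.smul hs)).det_pos

theorem mul_mul_transpose_same_s8 {m : Type*} [Fintype m] {S : Matrix n n ℝ} (hS : S.PosSemidef)
    (Φ : Matrix m n ℝ) : (Φ * S * Φᵀ).PosSemidef := by
  simpa using hS.mul_mul_conjTranspose_same Φ

end Matrix.PosSemidef

theorem Matrix.PosSemidef.tendsto_log_det_add_smul_one_sub_mul_log {n : ℕ}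
    {A : Matrix (Fin n) (Fin n) ℝ} (hA : A.PosSemidef) :
    Tendsto (fun s => log (A + s • (1 : Matrix (Fin n) (Fin n) ℝ)).det -
      ((n : ℝ) - A.rank) * log s) (𝓝[>] 0) (𝓝 (log (pdet A))) := by
  set g : ℝ → ℝ := fun s =>
    ∏ i ∈ Finset.univ.filter (fun i => hA.1.eigenvalues i ≠ 0), (hA.1.eigenvalues i + s)
  have hg_pos : ∀ s, 0 ≤ s → 0 < g s := fun s hs => Finset.prod_pos fun i hi =>
    add_pos_of_pos_of_nonneg
      ((hA.eigenvalues_nonneg i).lt_of_ne (Finset.mem_filter.mp hi).2.symm) hs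
  have hg_zero : g 0 = pdet A := by simp only [g, pdet, dif_pos hA.1, add_zero]
  have hlog_g : ContinuousAt (fun s => log (g s)) 0 :=
    ((continuous_finsetProd _ fun i _ => continuous_const.add continuous_id).continuousAt).log
      (hg_pos 0 le_rfl).ne'
  rw [← hg_zero]
  refine hlog_g.continuousWithinAt.tendsto.congr' ?_
  filter_upwards [self_mem_nhdsWithin] with s (hs : 0 < s)
  rw [hA.det_add_smul_one_eq_pow_mul_prod, Fintype.card_fin,
    log_mul (pow_ne_zero _ hs.ne') (hg_pos s hs.le).ne', log_pow,
    Nat.cast_sub (rank_le_width A)]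
  ring

theorem tendsto_div_log_of_tendsto_sub_mul_log {f : ℝ → ℝ} {a L : ℝ}
    (h : Tendsto (fun s => f s - a * log s) (𝓝[>] 0) (𝓝 L)) :
    Tendsto (fun s => f s / log s) (𝓝[>] 0) (𝓝 a) := by
  have hlim := (tendsto_const_nhds (x := a)).add (h.div_atBot tendsto_log_nhdsGT_zero)
  rw [add_zero] at hlim
  refine hlim.congr' ?_
  filter_upwards [Ioo_mem_nhdsGT one_pos] with s hs
  have hlog : log s ≠ 0 := (log_neg hs.1 hs.2).ne
  field_simp
  ring

section Bhattacharyya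

variable {M N : ℕ} (Φ : Matrix (Fin M) (Fin N) ℝ) {S1 S2 : Matrix (Fin N) (Fin N) ℝ}

theorem Kb_same_mean_eq (hS1 : S1.PosSemidef) (hS2 : S2.PosSemidef) (μ : Fin N → ℝ) {s : ℝ}
    (hs : 0 < s) :
    Kb Φ S1 S2 μ μ s = 1/2 * (M * log (1/2) +
      log (Φ * (S1 + S2) * Φᵀ + s • (1 : Matrix (Fin M) (Fin M) ℝ)).det -
      (log (Φ * S1 * Φᵀ + s • (1 : Matrix (Fin M) (Fin M) ℝ)).det +
        log (Φ * S2 * Φᵀ + s • (1 : Matrix (Fin M) (Fin M) ℝ)).det) / 2) := by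
  have h1 := (hS1.mul_mul_transpose_same_s8 Φ).det_add_smul_one_pos hs
  have h2 := (hS2.mul_mul_transpose_same_s8 Φ).det_add_smul_one_pos hs
  have h12 := ((hS1.add hS2).mul_mul_transpose_same_s8 Φ).det_add_smul_one_pos hs
  rw [Kb, sub_self, mulVec_zero, zero_dotProduct, det_smul, Fintype.card_fin,
    log_div (by positivity) (by positivity), log_mul (by positivity) h12.ne',
    log_sqrt (by positivity), log_mul h1.ne' h2.ne', log_pow]
  ring

theorem tendsto_log_Perr_div_log (hS1 : S1.PosSemidef) (hS2 : S2.PosSemidef) (μ : Fin N → ℝ)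
    {P1 P2 : ℝ} (hP : 0 < P1 * P2) :
    Tendsto (fun s => log (Perr Φ S1 S2 μ μ P1 P2 s) / log s) (𝓝[>] 0)
      (𝓝 ((2 * (Φ * (S1 + S2) * Φᵀ).rank - (Φ * S1 * Φᵀ).rank - (Φ * S2 * Φᵀ).rank) / 4)) := by
  apply tendsto_div_log_of_tendsto_sub_mul_log
  have hD1 := (hS1.mul_mul_transpose_same_s8 Φ).tendsto_log_det_add_smul_one_sub_mul_log
  have hD2 := (hS2.mul_mul_transpose_same_s8 Φ).tendsto_log_det_add_smul_one_sub_mul_log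
  have hD12 := ((hS1.add hS2).mul_mul_transpose_same_s8 Φ).tendsto_log_det_add_smul_one_sub_mul_log
  refine ((tendsto_const_nhds (x := log √(P1 * P2))).sub
    ((tendsto_const_nhds (x := (M : ℝ) * log (1/2))).add hD12 |>.sub ((hD1.add hD2).div_const 2)
      |>.const_mul (1/2))).congr' ?_
  filter_upwards [self_mem_nhdsWithin] with s (hs : 0 < s)
  rw [Perr, log_mul (by positivity) (exp_pos _).ne', log_exp, Kb_same_mean_eq Φ hS1 hS2 μ hs]
  ring

end Bhattacharyya

theorem theorem2_case_rho1_lt_M_le_rho2_general (M N : ℕ)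
    (Φ : Matrix (Fin M) (Fin N) ℝ) (S1 S2 : Matrix (Fin N) (Fin N) ℝ)
    (hS1 : S1.PosSemidef) (hS2 : S2.PosSemidef) (μ1 μ2 : Fin N → ℝ)
    (hμ1 : μ1 = 0) (hμ2 : μ2 = 0)
    (P1 P2 : ℝ) (hP1 : 0 < P1) (hP2 : 0 < P2)
    (hρb : S2.rank ≤ (S1 + S2).rank)
    (hr1 : (Φ * S1 * Φᵀ).rank = min M S1.rank)
    (hr2 : (Φ * S2 * Φᵀ).rank = min M S2.rank)
    (hr12 : (Φ * (S1 + S2) * Φᵀ).rank = min M (S1 + S2).rank)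
    (hcase1 : S1.rank < M) (hcase2 : M ≤ S2.rank) :
    Filter.Tendsto
      (fun s : ℝ => Real.log (Perr Φ S1 S2 μ1 μ2 P1 P2 s) / Real.log s) (𝓝[>] 0)
      (𝓝 (((M : ℝ) - (S1.rank : ℝ)) / 4)) := by
  subst hμ1 hμ2
  have hr1' : ((Φ * S1 * Φᵀ).rank : ℝ) = S1.rank := by rw [hr1, min_eq_right hcase1.le]
  have hr2' : ((Φ * S2 * Φᵀ).rank : ℝ) = M := by rw [hr2, min_eq_left hcase2]
  have hr12' : ((Φ * (S1 + S2) * Φᵀ).rank : ℝ) = M := by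
    rw [hr12, min_eq_left (hcase2.trans hρb)]
  convert tendsto_log_Perr_div_log Φ hS1 hS2 0 (mul_pos hP1 hP2) using 2
  rw [hr1', hr2', hr12']
  ring

/-- Theorem 2, case ρ1 < M ≤ ρ2: the diversity order is (M - ρ1)/4. -/
theorem theorem2_case_rho1_lt_M_le_rho2 (M N : ℕ) (hM : 0 < M) (hN : 0 < N)
    (Φ : Matrix (Fin M) (Fin N) ℝ) (S1 S2 : Matrix (Fin N) (Fin N) ℝ)
    (hS1 : S1.PosSemidef) (hS2 : S2.PosSemidef) (μ1 μ2 : Fin N → ℝ)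
    (hμ1 : μ1 = 0) (hμ2 : μ2 = 0)
    (P1 P2 : ℝ) (hP1 : 0 < P1) (hP2 : 0 < P2) (hP : P1 + P2 = 1)
    (hρa : S1.rank ≤ S2.rank) (hρb : S2.rank ≤ (S1 + S2).rank)
    (hr1 : (Φ * S1 * Φᵀ).rank = min M S1.rank)
    (hr2 : (Φ * S2 * Φᵀ).rank = min M S2.rank)
    (hr12 : (Φ * (S1 + S2) * Φᵀ).rank = min M (S1 + S2).rank)
    (hcase1 : S1.rank < M) (hcase2 : M ≤ S2.rank) :
    Filter.Tendsto
      (fun s : ℝ => Real.log (Perr Φ S1 S2 μ1 μ2 P1 P2 s) / Real.log s) (𝓝[>] 0)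
      (𝓝 (((M : ℝ) - (S1.rank : ℝ)) / 4)) :=
  theorem2_case_rho1_lt_M_le_rho2_general M N Φ S1 S2 hS1 hS2 μ1 μ2 hμ1 hμ2 P1 P2 hP1 hP2 hρb hr1
    hr2 hr12 hcase1 hcase2
end

section
/- (Limit of the quadratic form for vectors in the image.) Let C be a real symmetric positive semidefinite M×M matrix, let z ∈ ℝ^M, and set w = C z. Then for every ε > 0 the matrix C + ε·I is positive definite, and lim_{ε → 0+} wᵀ (C + ε·I)^{−1} w = zᵀ C z. Moreover, the value zᵀ C z depends only on w: if C z = C z′ = w then zᵀ C z = z′ᵀ C z′. -/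
open Matrix Filter Topology

/-!
Write `A_ε = C + ε • 1`. Substituting `C = A_ε - ε • 1` gives
`C A_ε⁻¹ C = C - ε • 1 + ε² A_ε⁻¹`, so `wᵀ A_ε⁻¹ w = zᵀ C z - ε zᵀ z + ε² zᵀ A_ε⁻¹ z`.
Since `A_ε ≥ ε • 1`, the last term lies between `0` and `ε zᵀ z`, and the limit follows by
squeezing. Independence of the representative `z` is the symmetry of `C`:
`z'ᵀ C z' = z'ᵀ C z = (C z')ᵀ z = (C z)ᵀ z`.
-/

namespace Matrix

variable {n : Type*} [Fintype n]

lemma mul_inv_add_smul_one_mul [DecidableEq n] {R : Type*} [CommRing R] (C : Matrix n n R)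
    {ε : R} (h : IsUnit (C + ε • (1 : Matrix n n R)).det) :
    C * (C + ε • 1)⁻¹ * C = C - ε • 1 + ε ^ 2 • (C + ε • 1)⁻¹ := by
  set A := C + ε • (1 : Matrix n n R)
  have hCA : C * A⁻¹ = 1 - ε • A⁻¹ := by
    rw [eq_sub_iff_add_eq, ← mul_nonsing_inv A h, add_mul, smul_mul, Matrix.one_mul]
  have hAC : A⁻¹ * C = 1 - ε • A⁻¹ := by
    rw [eq_sub_iff_add_eq, ← nonsing_inv_mul A h, mul_add, Matrix.mul_smul, Matrix.mul_one]
  rw [hCA, sub_mul, Matrix.one_mul, smul_mul, hAC, smul_sub, smul_smul, ← sq]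
  abel

lemma IsSymm.dotProduct_mulVec_eq_of_mulVec_eq {R : Type*} [CommSemiring R] {C : Matrix n n R}
    (hC : C.IsSymm) {z z' : n → R} (h : C *ᵥ z' = C *ᵥ z) :
    z' ⬝ᵥ (C *ᵥ z') = z ⬝ᵥ (C *ᵥ z) := by
  rw [h, dotProduct_mulVec, ← mulVec_transpose, hC.eq, h, dotProduct_comm]

namespace PosSemidef

variable [DecidableEq n] {C : Matrix n n ℝ} (hC : C.PosSemidef) {ε : ℝ} (hε : 0 < ε)
include hC hε

omit [Fintype n] in
lemma posDef_add_smul_one : (C + ε • (1 : Matrix n n ℝ)).PosDef :=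
  PosDef.posSemidef_add hC (PosDef.one.smul hε)

lemma smul_dotProduct_inv_add_smul_one_mulVec_le (z : n → ℝ) :
    ε * (z ⬝ᵥ ((C + ε • 1)⁻¹ *ᵥ z)) ≤ z ⬝ᵥ z := by
  set u := (C + ε • (1 : Matrix n n ℝ))⁻¹ *ᵥ z
  have hz : z = C *ᵥ u + ε • u := by
    have hdet := isUnit_iff_ne_zero.mpr (hC.posDef_add_smul_one hε).det_pos.ne'
    have hAu : (C + ε • 1) *ᵥ u = z := by
      rw [mulVec_mulVec, mul_nonsing_inv _ hdet, one_mulVec]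
    rwa [add_mulVec, smul_mulVec, one_mulVec, eq_comm] at hAu
  clear_value u
  have hCu : 0 ≤ (C *ᵥ u) ⬝ᵥ (C *ᵥ u) := by
    simpa using dotProduct_star_self_nonneg (C *ᵥ u)
  have huCu : 0 ≤ u ⬝ᵥ (C *ᵥ u) := by simpa using hC.dotProduct_mulVec_nonneg u
  calc ε * (z ⬝ᵥ u) ≤ ε * (z ⬝ᵥ u) + ((C *ᵥ u) ⬝ᵥ (C *ᵥ u) + ε * (u ⬝ᵥ (C *ᵥ u))) := by
        have := mul_nonneg hε.le huCu
        linarith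
    _ = z ⬝ᵥ z := by
        subst hz
        simp only [add_dotProduct, dotProduct_add, smul_dotProduct, dotProduct_smul, smul_eq_mul,
          dotProduct_comm u]
        ring

lemma dotProduct_mulVec_inv_add_smul_one_mulVec_mem_Icc (z : n → ℝ) :
    (C *ᵥ z) ⬝ᵥ ((C + ε • 1)⁻¹ *ᵥ (C *ᵥ z)) ∈
      Set.Icc (z ⬝ᵥ (C *ᵥ z) - ε * (z ⬝ᵥ z)) (z ⬝ᵥ (C *ᵥ z)) := by
  have hdet := isUnit_iff_ne_zero.mpr (hC.posDef_add_smul_one hε).det_pos.ne'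
  have hCt : Cᵀ = C := (isHermitian_iff_isSymm.mp hC.isHermitian).eq
  have hexpand : (C *ᵥ z) ⬝ᵥ ((C + ε • 1)⁻¹ *ᵥ (C *ᵥ z)) =
      z ⬝ᵥ (C *ᵥ z) - ε * (z ⬝ᵥ z) + ε * (ε * (z ⬝ᵥ ((C + ε • 1)⁻¹ *ᵥ z))) := by
    rw [dotProduct_comm, dotProduct_mulVec, ← mulVec_transpose, hCt, dotProduct_comm,
      mulVec_mulVec, mulVec_mulVec, mul_inv_add_smul_one_mul C hdet, add_mulVec, sub_mulVec,
      smul_mulVec, smul_mulVec, one_mulVec, dotProduct_add, dotProduct_sub, dotProduct_smul,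
      dotProduct_smul, smul_eq_mul, smul_eq_mul]
    ring
  have hnonneg : 0 ≤ z ⬝ᵥ ((C + ε • 1)⁻¹ *ᵥ z) := by
    simpa using (hC.posDef_add_smul_one hε).inv.posSemidef.dotProduct_mulVec_nonneg z
  have hle := hC.smul_dotProduct_inv_add_smul_one_mulVec_le hε z
  rw [hexpand]
  constructor
  · linarith [mul_nonneg hε.le (mul_nonneg hε.le hnonneg)]
  · linarith [mul_le_mul_of_nonneg_left hle hε.le]

end PosSemidef

lemma PosSemidef.tendsto_dotProduct_mulVec_inv_add_smul_one_mulVec [DecidableEq n]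
    {C : Matrix n n ℝ} (hC : C.PosSemidef) (z : n → ℝ) :
    Tendsto (fun ε : ℝ => (C *ᵥ z) ⬝ᵥ ((C + ε • 1)⁻¹ *ᵥ (C *ᵥ z)))
      (𝓝[>] 0) (𝓝 (z ⬝ᵥ (C *ᵥ z))) := by
  have hlower : Tendsto (fun ε : ℝ => z ⬝ᵥ (C *ᵥ z) - ε * (z ⬝ᵥ z)) (𝓝[>] 0)
      (𝓝 (z ⬝ᵥ (C *ᵥ z))) :=
    ((continuous_const.sub (continuous_id.mul continuous_const)).tendsto' 0 _
      (by simp)).mono_left nhdsWithin_le_nhds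
  refine tendsto_of_tendsto_of_tendsto_of_le_of_le' hlower tendsto_const_nhds ?_ ?_ <;>
    filter_upwards [self_mem_nhdsWithin] with ε hε
  exacts [(hC.dotProduct_mulVec_inv_add_smul_one_mulVec_mem_Icc hε z).1,
    (hC.dotProduct_mulVec_inv_add_smul_one_mulVec_mem_Icc hε z).2]

end Matrix

theorem quadratic_form_limit_in_image_general (M : ℕ)
    (C : Matrix (Fin M) (Fin M) ℝ) (hC : C.PosSemidef) (z : Fin M → ℝ) :
    (∀ ε : ℝ, 0 < ε → (C + ε • (1 : Matrix (Fin M) (Fin M) ℝ)).PosDef) ∧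
    Tendsto
      (fun ε : ℝ => (C *ᵥ z) ⬝ᵥ ((C + ε • (1 : Matrix (Fin M) (Fin M) ℝ))⁻¹ *ᵥ (C *ᵥ z)))
      (𝓝[>] 0) (𝓝 (z ⬝ᵥ (C *ᵥ z))) ∧
    (∀ z' : Fin M → ℝ, C *ᵥ z' = C *ᵥ z → z' ⬝ᵥ (C *ᵥ z') = z ⬝ᵥ (C *ᵥ z)) :=
  ⟨fun _ hε => hC.posDef_add_smul_one hε,
    hC.tendsto_dotProduct_mulVec_inv_add_smul_one_mulVec z,
    fun _ h => (isHermitian_iff_isSymm.mp hC.isHermitian).dotProduct_mulVec_eq_of_mulVec_eq h⟩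

/-- Limit of the quadratic form for vectors in the image: for a real symmetric
positive semidefinite `M × M` matrix `C` and `w = C z`, the matrix `C + ε I`
is positive definite for every `ε > 0`, and
`lim_{ε→0⁺} wᵀ (C + ε I)⁻¹ w = zᵀ C z`; moreover `zᵀ C z` depends only on `w`. -/
theorem quadratic_form_limit_in_image (M : ℕ) (hM : 0 < M)
    (C : Matrix (Fin M) (Fin M) ℝ) (hC : C.PosSemidef) (z : Fin M → ℝ) :
    (∀ ε : ℝ, 0 < ε → (C + ε • (1 : Matrix (Fin M) (Fin M) ℝ)).PosDef) ∧
    Tendsto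
      (fun ε : ℝ => (C *ᵥ z) ⬝ᵥ ((C + ε • (1 : Matrix (Fin M) (Fin M) ℝ))⁻¹ *ᵥ (C *ᵥ z)))
      (𝓝[>] 0) (𝓝 (z ⬝ᵥ (C *ᵥ z))) ∧
    (∀ z' : Fin M → ℝ, C *ᵥ z' = C *ᵥ z → z' ⬝ᵥ (C *ᵥ z') = z ⬝ᵥ (C *ᵥ z)) :=
  quadratic_form_limit_in_image_general M C hC z
end

section
/- (Blow-up of the quadratic form for vectors outside the image.) Let C be a real symmetric positive semidefinite M×M matrix and let w ∈ ℝ^M be a vector not in the column space of C. Let v be the orthogonal projection of w onto ker C (which equals the orthogonal complement of the column space of C since C is symmetric). Then v ≠ 0 and lim_{ε → 0+} ε · wᵀ (C + ε·I)^{−1} w = ‖v‖² > 0; in particular wᵀ (C + ε·I)^{−1} w → ∞ as ε → 0+. -/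
open Matrix Filter Topology

/-!
Write `w = v + C x` with `C v = 0`. Since `(C + ε I) v = ε v` and `C x ⊥ v`, the quadratic form
splits as `wᵀ (C + ε I)⁻¹ w = ε⁻¹ ‖v‖² + (C x)ᵀ (C + ε I)⁻¹ (C x)`, and the second term stays in
`[0, xᵀ C x]` for all `ε > 0`. Multiplying by `ε` gives the limit `‖v‖²`, which is positive
because `w ∉ im C` forces `v ≠ 0`.
-/

namespace Matrix

variable {n : Type*} {C : Matrix n n ℝ} {ε : ℝ}

lemma IsHermitian.dotProduct_mulVec_comm [Fintype n] {A : Matrix n n ℝ} (hA : A.IsHermitian)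
    (x y : n → ℝ) :
    x ⬝ᵥ (A *ᵥ y) = y ⬝ᵥ (A *ᵥ x) := by
  rw [dotProduct_mulVec, ← mulVec_transpose, dotProduct_comm,
    ← conjTranspose_eq_transpose_of_trivial, hA.eq]

lemma PosSemidef.posDef_add_smul_one_s16 [DecidableEq n] (hC : C.PosSemidef) (hε : 0 < ε) :
    (C + ε • (1 : Matrix n n ℝ)).PosDef :=
  PosDef.posSemidef_add hC (PosDef.one.smul hε)

variable [Fintype n] [DecidableEq n]

lemma PosSemidef.dotProduct_inv_add_smul_one_mulVec_nonneg (hC : C.PosSemidef) (hε : 0 ≤ ε)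
    (u : n → ℝ) : 0 ≤ u ⬝ᵥ ((C + ε • (1 : Matrix n n ℝ))⁻¹ *ᵥ u) := by
  simpa using ((hC.add (PosSemidef.one.smul hε)).inv).dotProduct_mulVec_nonneg u

lemma inv_add_smul_one_mulVec_of_mulVec_eq_zero (hC : C.PosSemidef) (hε : 0 < ε)
    {v : n → ℝ} (hv : C *ᵥ v = 0) : (C + ε • (1 : Matrix n n ℝ))⁻¹ *ᵥ v = ε⁻¹ • v := by
  have := (hC.posDef_add_smul_one_s16 hε).isUnit.invertible
  refine inv_mulVec_eq_vec ?_
  rw [mulVec_smul, add_mulVec, hv, zero_add, smul_mulVec, one_mulVec, smul_smul,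
    inv_mul_cancel₀ hε.ne', one_smul]

/-- For `A = C + ε I` and `u = C x`, `uᵀ A⁻¹ u = max_y (2 uᵀ y - yᵀ A y)`, attained at
`y = A⁻¹ u`; since `A ≥ C` this is at most `max_y (2 xᵀ C y - yᵀ C y) = xᵀ C x`. -/
lemma PosSemidef.dotProduct_inv_add_smul_one_mulVec_le (hC : C.PosSemidef) (hε : 0 < ε)
    (x : n → ℝ) :
    (C *ᵥ x) ⬝ᵥ ((C + ε • (1 : Matrix n n ℝ))⁻¹ *ᵥ (C *ᵥ x)) ≤ x ⬝ᵥ (C *ᵥ x) := by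
  set A := C + ε • (1 : Matrix n n ℝ)
  set z := A⁻¹ *ᵥ (C *ᵥ x)
  have := (hC.posDef_add_smul_one_s16 hε).isUnit.invertible
  have hAz : A *ᵥ z = C *ᵥ x := by simp [z, mulVec_mulVec]
  have hz : (C *ᵥ x) ⬝ᵥ z = z ⬝ᵥ (C *ᵥ z) + ε * (z ⬝ᵥ z) := by
    rw [← hAz, dotProduct_comm, add_mulVec, dotProduct_add, smul_mulVec, one_mulVec,
      dotProduct_smul, smul_eq_mul]
  have hxz : (C *ᵥ x) ⬝ᵥ z = x ⬝ᵥ (C *ᵥ z) := by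
    rw [dotProduct_comm, hC.isHermitian.dotProduct_mulVec_comm]
  have hzz : 0 ≤ z ⬝ᵥ z := by simpa using dotProduct_star_self_nonneg z
  have hdiff : 0 ≤ (x - z) ⬝ᵥ (C *ᵥ (x - z)) := by
    simpa using hC.dotProduct_mulVec_nonneg (x - z)
  have hexp : (x - z) ⬝ᵥ (C *ᵥ (x - z))
      = x ⬝ᵥ (C *ᵥ x) - 2 * (x ⬝ᵥ (C *ᵥ z)) + z ⬝ᵥ (C *ᵥ z) := by
    rw [mulVec_sub, sub_dotProduct, dotProduct_sub, dotProduct_sub,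
      hC.isHermitian.dotProduct_mulVec_comm z x]
    ring
  nlinarith [mul_nonneg hε.le hzz]

lemma PosSemidef.dotProduct_inv_add_smul_one_mulVec_add (hC : C.PosSemidef) (hε : 0 < ε)
    {v : n → ℝ} (hv : C *ᵥ v = 0) (x : n → ℝ) :
    (v + C *ᵥ x) ⬝ᵥ ((C + ε • (1 : Matrix n n ℝ))⁻¹ *ᵥ (v + C *ᵥ x))
      = ε⁻¹ * (v ⬝ᵥ v) + (C *ᵥ x) ⬝ᵥ ((C + ε • (1 : Matrix n n ℝ))⁻¹ *ᵥ (C *ᵥ x)) := by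
  have hAinv := (hC.posDef_add_smul_one_s16 hε).inv.isHermitian
  have horth : (C *ᵥ x) ⬝ᵥ v = 0 := by
    rw [dotProduct_comm, hC.isHermitian.dotProduct_mulVec_comm, hv, dotProduct_zero]
  rw [mulVec_add, dotProduct_add, add_dotProduct, add_dotProduct,
    hAinv.dotProduct_mulVec_comm v (C *ᵥ x), inv_add_smul_one_mulVec_of_mulVec_eq_zero hC hε hv,
    dotProduct_smul, dotProduct_smul, horth]
  simp

theorem PosSemidef.tendsto_mul_dotProduct_inv_add_smul_one_mulVec (hC : C.PosSemidef)
    {v w : n → ℝ} (hv : C *ᵥ v = 0) (hwv : w - v ∈ LinearMap.range C.mulVecLin) :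
    Tendsto (fun ε : ℝ => ε * (w ⬝ᵥ ((C + ε • (1 : Matrix n n ℝ))⁻¹ *ᵥ w)))
      (𝓝[>] 0) (𝓝 (v ⬝ᵥ v)) := by
  obtain ⟨x, hx⟩ := hwv
  obtain rfl : w = v + C *ᵥ x := by rw [mulVecLin_apply] at hx; rw [hx]; abel
  set q : ℝ → ℝ := fun ε => (C *ᵥ x) ⬝ᵥ ((C + ε • (1 : Matrix n n ℝ))⁻¹ *ᵥ (C *ᵥ x))
  have hq : Tendsto (fun ε => ε * q ε) (𝓝[>] 0) (𝓝 0) := by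
    have hK : Tendsto (fun ε : ℝ => ε * (x ⬝ᵥ (C *ᵥ x))) (𝓝[>] 0) (𝓝 0) :=
      tendsto_nhdsWithin_of_tendsto_nhds
        (by simpa using (tendsto_id (x := 𝓝 (0 : ℝ))).mul_const (x ⬝ᵥ (C *ᵥ x)))
    refine tendsto_of_tendsto_of_tendsto_of_le_of_le' tendsto_const_nhds hK ?_ ?_ <;>
      filter_upwards [self_mem_nhdsWithin] with ε (hε : 0 < ε)
    · exact mul_nonneg hε.le (hC.dotProduct_inv_add_smul_one_mulVec_nonneg hε.le _)
    · exact mul_le_mul_of_nonneg_left (hC.dotProduct_inv_add_smul_one_mulVec_le hε x) hε.le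
  refine (add_zero (v ⬝ᵥ v) ▸ hq.const_add (v ⬝ᵥ v)).congr' ?_
  filter_upwards [self_mem_nhdsWithin] with ε (hε : 0 < ε)
  rw [hC.dotProduct_inv_add_smul_one_mulVec_add hε hv, mul_add, ← mul_assoc,
    mul_inv_cancel₀ hε.ne', one_mul]

end Matrix

theorem quadratic_form_blowup_out_of_image_general (M : ℕ)
    (C : Matrix (Fin M) (Fin M) ℝ) (hC : C.PosSemidef) (w : Fin M → ℝ)
    (hw : w ∉ LinearMap.range C.mulVecLin)
    (v : Fin M → ℝ) (hv1 : C *ᵥ v = 0) (hv2 : w - v ∈ LinearMap.range C.mulVecLin) :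
    v ≠ 0 ∧ 0 < v ⬝ᵥ v ∧
    Tendsto
      (fun ε : ℝ => ε * (w ⬝ᵥ ((C + ε • (1 : Matrix (Fin M) (Fin M) ℝ))⁻¹ *ᵥ w)))
      (𝓝[>] 0) (𝓝 (v ⬝ᵥ v)) ∧
    Tendsto (fun ε : ℝ => w ⬝ᵥ ((C + ε • (1 : Matrix (Fin M) (Fin M) ℝ))⁻¹ *ᵥ w))
      (𝓝[>] 0) atTop := by
  have hv : v ≠ 0 := by
    rintro rfl
    exact hw (by simpa using hv2)
  have hvv : 0 < v ⬝ᵥ v :=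
    lt_of_le_of_ne (by simpa using dotProduct_star_self_nonneg v)
      (Ne.symm (dotProduct_self_eq_zero.not.mpr hv))
  have hlim := hC.tendsto_mul_dotProduct_inv_add_smul_one_mulVec hv1 hv2
  refine ⟨hv, hvv, hlim, (hlim.pos_mul_atTop hvv tendsto_inv_nhdsGT_zero).congr' ?_⟩
  filter_upwards [self_mem_nhdsWithin] with ε (hε : 0 < ε)
  simp [field]

/-- Blow-up of the quadratic form for vectors outside the image: for a real
symmetric positive semidefinite `M × M` matrix `C` and a vector `w` not in the
column space of `C`, let `v` be the orthogonal projection of `w` onto `ker C`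
(characterized by `C v = 0` and `w - v ∈ im C`, since `(ker C)ᗮ = im C` for
symmetric `C`). Then `v ≠ 0`, `lim_{ε→0⁺} ε · wᵀ (C + ε I)⁻¹ w = ‖v‖² > 0`,
and in particular `wᵀ (C + ε I)⁻¹ w → ∞` as `ε → 0⁺`. -/
theorem quadratic_form_blowup_out_of_image (M : ℕ) (hM : 0 < M)
    (C : Matrix (Fin M) (Fin M) ℝ) (hC : C.PosSemidef) (w : Fin M → ℝ)
    (hw : w ∉ LinearMap.range C.mulVecLin)
    (v : Fin M → ℝ) (hv1 : C *ᵥ v = 0) (hv2 : w - v ∈ LinearMap.range C.mulVecLin) :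
    v ≠ 0 ∧ 0 < v ⬝ᵥ v ∧
    Tendsto
      (fun ε : ℝ => ε * (w ⬝ᵥ ((C + ε • (1 : Matrix (Fin M) (Fin M) ℝ))⁻¹ *ᵥ w)))
      (𝓝[>] 0) (𝓝 (v ⬝ᵥ v)) ∧
    Tendsto (fun ε : ℝ => w ⬝ᵥ ((C + ε • (1 : Matrix (Fin M) (Fin M) ℝ))⁻¹ *ᵥ w))
      (𝓝[>] 0) atTop :=
  quadratic_form_blowup_out_of_image_general M C hC w hw v hv1 hv2
end
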